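/- The function V(x) = Δ(x) − E[Δ(x + S_{τ_x})] is monotone in the gaps: if x, y ∈ W satisfy x^{(j)} − x^{(j−1)} ≤ y^{(j)} − y^{(j−1)} for all 2 ≤ j ≤ k, then V(x) ≤ V(y). -/

import Mathlib

/-!
`Δ(z + S_n)` is a martingale. Expanding `Δ` by the Leibniz formula, one step of the walk turns
each monomial `∏ⱼ xⱼ ^ cⱼ` into `∏ⱼ Q_{cⱼ}(xⱼ)` with `Q_c(t) = E (t + ξ₀) ^ c` monic of degree
`c`, and replacing the columns `t ^ c` of a Vandermonde matrix by monic polynomials of the same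
degrees does not change its determinant. Since the coordinates are independent and appear with
degree at most `k - 1`, moments of order `k - 1` suffice for integrability.

Optional stopping at `τ ∧ n` then gives `V(z) = lim_n E[Δ(z + S_n); τ_z > n]`, the remainder
`E[Δ(z + S_τ); τ > n]` vanishing since `Δ(z + S_τ)` is integrable. Finally, dominated gaps mean
that `y - x` is monotone, so `y + S_m` lies in the Weyl chamber whenever `x + S_m` does, with
`Δ(x + S_m) ≤ Δ(y + S_m)`; hence `τ_x ≤ τ_y` and the two limits compare.
-/

open MeasureTheory ProbabilityTheory Filter Finset

noncomputable section

/-- The Weyl chamber `{x : x 0 < x 1 < ... < x (k-1)}`. -/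
def weyl (k : ℕ) : Set (Fin k → ℝ) := {x | ∀ i j : Fin k, i < j → x i < x j}

/-- The set of ordered pairs `(i,j)` with `i < j`. -/
def pairs (k : ℕ) : Finset (Fin k × Fin k) := Finset.univ.filter (fun p => p.1 < p.2)

/-- The Vandermonde determinant `Δ(x) = ∏_{i<j} (x j - x i)`. -/
def vdm (k : ℕ) (x : Fin k → ℝ) : ℝ := ∏ p ∈ pairs k, (x p.2 - x p.1)

/-- The perturbed Vandermonde product `Δ₁(x) = ∏_{i<j} (1 + |x j - x i|)`. -/
def vdmOne (k : ℕ) (x : Fin k → ℝ) : ℝ := ∏ p ∈ pairs k, (1 + |x p.2 - x p.1|)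

open scoped Topology

open Polynomial in
lemma vdm_eq_sum_perm {k : ℕ} (P : Fin k → ℝ[X]) (hdeg : ∀ b, (P b).natDegree = b)
    (hmonic : ∀ b, (P b).Monic) (x : Fin k → ℝ) :
    vdm k x = ∑ σ : Equiv.Perm (Fin k), (Equiv.Perm.sign σ : ℝ) * ∏ j, (P (σ⁻¹ j)).eval (x j) := by
  have hvdm : vdm k x = (Matrix.vandermonde x).det := by
    rw [Matrix.det_vandermonde, vdm, pairs, prod_filter, Fintype.prod_prod_type]
    refine prod_congr rfl fun i _ => ?_
    rw [← prod_filter]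
    exact prod_congr (by ext; simp) fun _ _ => rfl
  rw [hvdm, Matrix.det_eval_matrixOfPolynomials_eq_det_vandermonde x P hdeg hmonic,
    Matrix.det_apply']
  refine sum_congr rfl fun σ _ => ?_
  rw [← Equiv.prod_comp σ (fun j => (P (σ⁻¹ j)).eval (x j))]
  simp

lemma vdm_pos_of_mem_weyl {k : ℕ} {x : Fin k → ℝ} (hx : x ∈ weyl k) : 0 < vdm k x :=
  prod_pos fun _ hp => sub_pos.mpr (hx _ _ (mem_filter.mp hp).2)

lemma monotone_sub_of_gaps {k : ℕ} {u v : Fin k → ℝ}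
    (hg : ∀ j : Fin k, ∀ h : (j : ℕ) + 1 < k, u ⟨(j : ℕ) + 1, h⟩ - u j ≤ v ⟨(j : ℕ) + 1, h⟩ - v j) :
    Monotone (v - u) := by
  cases k with
  | zero => exact fun i => i.elim0
  | succ n =>
    refine Fin.monotone_iff_le_succ.mpr fun i => ?_
    have := hg i.castSucc (by simp)
    simp only [Pi.sub_apply, Fin.val_castSucc] at this ⊢
    rw [show (⟨(i : ℕ) + 1, _⟩ : Fin (n + 1)) = i.succ from rfl] at this
    linarith

lemma mem_weyl_of_monotone_sub {k : ℕ} {u v : Fin k → ℝ} (hu : u ∈ weyl k)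
    (h : Monotone (v - u)) : v ∈ weyl k := fun i j hij => by
  have := h hij.le
  have := hu i j hij
  simp only [Pi.sub_apply] at *
  linarith

lemma vdm_le_vdm_of_monotone_sub {k : ℕ} {u v : Fin k → ℝ} (hu : u ∈ weyl k)
    (h : Monotone (v - u)) : vdm k u ≤ vdm k v := by
  refine prod_le_prod (fun _ hp => (sub_pos.mpr (hu _ _ (mem_filter.mp hp).2)).le)
    fun p hp => ?_
  have := h (mem_filter.mp hp).2.le
  simp only [Pi.sub_apply] at this
  linarith

lemma abs_vdm_le_prod_pow {k : ℕ} (w : Fin k → ℝ) :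
    |vdm k w| ≤ ∏ j, (1 + |w j|) ^ (k - 1) := by
  have hpair : ∀ a b : ℝ, |b - a| ≤ (1 + |a|) * (1 + |b|) := fun a b => by
    nlinarith [abs_sub b a, abs_nonneg a, abs_nonneg b, mul_nonneg (abs_nonneg a) (abs_nonneg b)]
  calc |vdm k w| ≤ ∏ p ∈ pairs k, (1 + |w p.1|) * (1 + |w p.2|) := by
        rw [vdm, abs_prod]
        exact prod_le_prod (fun _ _ => abs_nonneg _) fun p _ => hpair _ _
    _ = ∏ j, (1 + |w j|) ^ (k - 1) := by
        rw [prod_mul_distrib, pairs, prod_filter, prod_filter, Fintype.prod_prod_type,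
          Fintype.prod_prod_type, prod_comm (f := fun a b => if a < b then 1 + |w b| else 1),
          ← prod_mul_distrib]
        refine prod_congr rfl fun i _ => ?_
        simp only [prod_ite, prod_const_one, mul_one, prod_const, ← pow_add]
        congr 1
        rw [filter_lt_eq_Ioi, filter_gt_eq_Iio, Fin.card_Ioi, Fin.card_Iio]
        omega

lemma continuous_vdm (k : ℕ) : Continuous (vdm k) :=
  continuous_finsetProd _ fun p _ => (continuous_apply p.2).sub (continuous_apply p.1)

lemma measurableSet_weyl (k : ℕ) : MeasurableSet (weyl k) := by
  have : weyl k = ⋂ (i : Fin k) (j : Fin k) (_ : i < j), {x : Fin k → ℝ | x i < x j} := by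
    ext x; simp [weyl]
  rw [this]
  exact .iInter fun i => .iInter fun j => .iInter fun _ =>
    measurableSet_lt (measurable_pi_apply i) (measurable_pi_apply j)

section BlockMeasurable

variable {ι Ω : Type*} {X : ι → Ω → ℝ}

def BlockMeasurable (X : ι → Ω → ℝ) (t : Finset ι) (g : Ω → ℝ) : Prop :=
  ∃ G : (t → ℝ) → ℝ, Measurable G ∧ ∀ ω, g ω = G (fun i => X i ω)

lemma BlockMeasurable.of_dependsOn {t : Finset ι} {F : (ι → ℝ) → ℝ} (hF : Measurable F)
    (hdep : DependsOn F t) : BlockMeasurable X t (fun ω => F (fun i => X i ω)) := by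
  classical
  refine ⟨fun v => F (fun i => if h : i ∈ t then v ⟨i, h⟩ else 0), hF.comp ?_,
    fun ω => hdep fun i hi => by rw [dif_pos (mem_coe.mp hi)]⟩
  refine measurable_pi_lambda _ fun i => ?_
  by_cases h : i ∈ t
  · simpa [h] using measurable_pi_apply (⟨i, h⟩ : t)
  · simp [h]

lemma BlockMeasurable.const (X : ι → Ω → ℝ) (t : Finset ι) (c : ℝ) :
    BlockMeasurable X t (fun _ => c) :=
  ⟨fun _ => c, measurable_const, fun _ => rfl⟩

lemma BlockMeasurable.mono {t t' : Finset ι} {g : Ω → ℝ} (h : BlockMeasurable X t g)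
    (hsub : t ⊆ t') : BlockMeasurable X t' g := by
  obtain ⟨G, hG, hg⟩ := h
  exact ⟨fun v => G (fun i => v ⟨i, hsub i.2⟩),
    hG.comp (measurable_pi_lambda _ fun _ => measurable_pi_apply _), hg⟩

lemma BlockMeasurable.mul {t : Finset ι} {g h : Ω → ℝ} (hg : BlockMeasurable X t g)
    (hh : BlockMeasurable X t h) : BlockMeasurable X t (fun ω => g ω * h ω) := by
  obtain ⟨G, hG, hgG⟩ := hg
  obtain ⟨H, hH, hhH⟩ := hh
  exact ⟨fun v => G v * H v, hG.mul hH, fun ω => congrArg₂ (· * ·) (hgG ω) (hhH ω)⟩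

lemma BlockMeasurable.prod {α : Type*} {t : Finset ι} (s : Finset α) {h : α → Ω → ℝ}
    (hh : ∀ a ∈ s, BlockMeasurable X t (h a)) : BlockMeasurable X t (fun ω => ∏ a ∈ s, h a ω) := by
  classical
  induction s using Finset.induction_on with
  | empty => simpa using BlockMeasurable.const X t 1
  | @insert a s ha ih =>
    simp only [prod_insert ha]
    exact (hh a (mem_insert_self a s)).mul (ih fun b hb => hh b (mem_insert_of_mem hb))

variable [MeasurableSpace Ω]

lemma BlockMeasurable.measurable (hX : ∀ i, Measurable (X i)) {t : Finset ι} {g : Ω → ℝ}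
    (h : BlockMeasurable X t g) : Measurable g := by
  obtain ⟨G, hG, hg⟩ := h
  rw [funext hg]
  exact hG.comp (measurable_pi_lambda _ fun i => hX i)

variable {μ : Measure Ω}

lemma BlockMeasurable.indepFun (hX : ∀ i, Measurable (X i)) (hindep : iIndepFun X μ)
    {s t : Finset ι} (hst : Disjoint s t) {g h : Ω → ℝ}
    (hg : BlockMeasurable X s g) (hh : BlockMeasurable X t h) : IndepFun g h μ := by
  obtain ⟨G, hG, hgG⟩ := hg
  obtain ⟨H, hH, hhH⟩ := hh
  rw [funext hgG, funext hhH]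
  exact (hindep.indepFun_finset s t hst hX).comp hG hH

lemma BlockMeasurable.integral_prod [IsProbabilityMeasure μ] (hX : ∀ i, Measurable (X i))
    (hindep : iIndepFun X μ) {α : Type*} [DecidableEq α] [DecidableEq ι] (B : α → Finset ι)
    (h : α → Ω → ℝ) (s : Finset α) (hdisj : (s : Set α).PairwiseDisjoint B)
    (hblk : ∀ a ∈ s, BlockMeasurable X (B a) (h a)) (hint : ∀ a ∈ s, Integrable (h a) μ) :
    BlockMeasurable X (s.biUnion B) (fun ω => ∏ a ∈ s, h a ω) ∧
      Integrable (fun ω => ∏ a ∈ s, h a ω) μ ∧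
      ∫ ω, ∏ a ∈ s, h a ω ∂μ = ∏ a ∈ s, ∫ ω, h a ω ∂μ := by
  induction s using Finset.induction_on with
  | empty => simpa using BlockMeasurable.const X ∅ 1
  | @insert a s ha ih =>
    obtain ⟨hb, hi, heq⟩ := ih (hdisj.subset (by simp))
      (fun b hb => hblk b (mem_insert_of_mem hb)) (fun b hb => hint b (mem_insert_of_mem hb))
    have hBa : Disjoint (B a) (s.biUnion B) := by
      refine (disjoint_biUnion_right _ _ _).mpr fun b hb => hdisj (by simp) (by simp [hb]) ?_
      rintro rfl; exact ha hb
    have hind : IndepFun (h a) (fun ω => ∏ b ∈ s, h b ω) μ :=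
      (hblk a (mem_insert_self a s)).indepFun hX hindep hBa hb
    simp only [prod_insert ha, biUnion_insert]
    refine ⟨((hblk a (mem_insert_self a s)).mono subset_union_left).mul
        (hb.mono subset_union_right), hind.integrable_mul (hint a (mem_insert_self a s)) hi, ?_⟩
    rw [← heq]
    exact hind.integral_fun_mul_eq_mul_integral (hint a (mem_insert_self a s)).1 hi.1

end BlockMeasurable

section Walk

variable {k : ℕ} {Ω : Type*} {ξ : ℕ → Fin k → Ω → ℝ}

def walk (ξ : ℕ → Fin k → Ω → ℝ) (n : ℕ) (ω : Ω) : Fin k → ℝ :=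
  fun j => ∑ i ∈ range n, ξ i j ω

@[simp]
lemma walk_zero (ω : Ω) : walk ξ 0 ω = 0 := by
  ext; simp [walk]

lemma walk_succ (n : ℕ) (ω : Ω) : walk ξ (n + 1) ω = walk ξ n ω + fun j => ξ n j ω := by
  ext; simp [walk, sum_range_succ]

lemma blockMeasurable_comp_walk {F : (Fin k → ℝ) → ℝ} (hF : Measurable F) {s : Finset (Fin k)}
    (hdep : DependsOn F s) (n : ℕ) :
    BlockMeasurable (Function.uncurry ξ) (range n ×ˢ s) (fun ω => F (walk ξ n ω)) := by
  refine BlockMeasurable.of_dependsOn (F := fun u => F fun j => ∑ i ∈ range n, u (i, j))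
    (hF.comp <| measurable_pi_lambda _ fun j => Finset.measurable_sum _ fun i _ =>
      measurable_pi_apply _) fun u u' h => hdep fun j hj => sum_congr rfl fun i hi => h _ ?_
  simp_all

lemma blockMeasurable_prod_indicator_weyl (z : Fin k → ℝ) (n : ℕ) :
    BlockMeasurable (Function.uncurry ξ) (range n ×ˢ univ)
      (fun ω => ∏ m ∈ Icc 1 n, (weyl k).indicator 1 (z + walk ξ m ω)) :=
  BlockMeasurable.prod _ fun m hm => (blockMeasurable_comp_walk
    (F := fun w => (weyl k).indicator 1 (z + w))
    ((measurable_one.indicator (measurableSet_weyl k)).comp (measurable_const_add z))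
    (by simpa using dependsOn_univ _) m).mono
    (product_subset_product_left (range_mono (mem_Icc.mp hm).2))

variable [MeasurableSpace Ω] {μ : Measure Ω}

lemma measurable_walk (hmeas : ∀ i j, Measurable (ξ i j)) (n : ℕ) : Measurable (walk ξ n) :=
  measurable_pi_lambda _ fun j => Finset.measurable_sum _ fun i _ => hmeas i j

lemma memLp_of_integrable_abs_rpow [IsFiniteMeasure μ] {f : Ω → ℝ} (hf : AEStronglyMeasurable f μ)
    {α : ℝ} {p : ℕ} (hα : 0 < α) (hp : (p : ℝ) ≤ α) (h : Integrable (fun ω => |f ω| ^ α) μ) :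
    MemLp f p μ := by
  have hLp : MemLp f (ENNReal.ofReal α) μ :=
    (integrable_norm_rpow_iff hf (ENNReal.ofReal_pos.mpr hα).ne' ENNReal.ofReal_ne_top).mp
      (by simpa [ENNReal.toReal_ofReal hα.le] using h)
  refine hLp.mono_exponent ?_
  rw [← ENNReal.ofReal_natCast]
  exact ENNReal.ofReal_le_ofReal hp

lemma MeasureTheory.MemLp.integrable_pow_of_le [IsFiniteMeasure μ] {f : Ω → ℝ} {p e : ℕ}
    (hf : MemLp f p μ) (he : e ≤ p) : Integrable (fun ω => f ω ^ e) μ :=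
  (hf.mono_exponent (by exact_mod_cast he)).integrable_norm_pow'.mono' (hf.1.pow e)
    (.of_forall fun _ => by simp)

lemma memLp_walk {p : ENNReal} (hLp : ∀ i j, MemLp (ξ i j) p μ) (n : ℕ) (j : Fin k) :
    MemLp (fun ω => walk ξ n ω j) p μ :=
  memLp_finsetSum _ fun i _ => hLp i j

lemma integrable_one_add_abs_pow [IsFiniteMeasure μ] {f : Ω → ℝ} {e : ℕ} (hf : MemLp f e μ)
    (c : ℝ) : Integrable (fun ω => (1 + |c + f ω|) ^ e) μ := by
  have hLp : MemLp (fun ω => 1 + |c + f ω|) e μ :=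
    (memLp_const (1 : ℝ)).add ((memLp_const c).add hf).abs
  refine hLp.integrable_norm_pow'.congr (.of_forall fun ω => ?_)
  simp only [Real.norm_eq_abs]
  rw [abs_of_nonneg (by positivity)]

variable [IsProbabilityMeasure μ]

lemma integrable_prod_one_add_abs_walk_pow (hmeas : ∀ i j, Measurable (ξ i j))
    (hindep : iIndepFun (Function.uncurry ξ) μ) {e : ℕ} (hLp : ∀ i j, MemLp (ξ i j) e μ)
    (z : Fin k → ℝ) (n : ℕ) :
    Integrable (fun ω => ∏ j, (1 + |z j + walk ξ n ω j|) ^ e) μ := by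
  classical
  refine (BlockMeasurable.integral_prod (fun p => hmeas p.1 p.2) hindep
    (fun j => range n ×ˢ {j}) (fun j ω => (1 + |z j + walk ξ n ω j|) ^ e) univ ?_ ?_ ?_).2.1
  · exact fun a _ b _ hab => disjoint_product.mpr (.inr (disjoint_singleton.mpr hab))
  · exact fun j _ => blockMeasurable_comp_walk (F := fun w => (1 + |z j + w j|) ^ e)
      (by fun_prop) (fun u u' h => by simp only [h j (mem_coe.mpr (mem_singleton_self j))]) n
  · exact fun j _ => integrable_one_add_abs_pow (memLp_walk hLp n j) (z j)

lemma integrable_vdm_walk (hmeas : ∀ i j, Measurable (ξ i j))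
    (hindep : iIndepFun (Function.uncurry ξ) μ) (hLp : ∀ i j, MemLp (ξ i j) (k - 1 : ℕ) μ)
    (z : Fin k → ℝ) (n : ℕ) :
    Integrable (fun ω => vdm k (z + walk ξ n ω)) μ :=
  (integrable_prod_one_add_abs_walk_pow hmeas hindep hLp z n).mono'
    ((continuous_vdm k).measurable.comp
      ((measurable_walk hmeas n).const_add z)).aestronglyMeasurable
    (.of_forall fun _ => abs_vdm_le_prod_pow _)

end Walk

section MomentPoly

open Polynomial

variable {Ω : Type*} [MeasurableSpace Ω] (μ : Measure Ω) (ξ₀ : Ω → ℝ)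

/-- `t ↦ E (t + ξ₀) ^ c`, expanded binomially. -/
def momentPoly (c : ℕ) : ℝ[X] :=
  ∑ m ∈ range (c + 1), C (c.choose m * ∫ ω, ξ₀ ω ^ (c - m) ∂μ) * X ^ m

lemma eval_momentPoly (c : ℕ) (t : ℝ) : (momentPoly μ ξ₀ c).eval t =
    ∑ m ∈ range (c + 1), t ^ m * (c.choose m * ∫ ω, ξ₀ ω ^ (c - m) ∂μ) := by
  simp [momentPoly, eval_finsetSum, mul_comm]

variable [IsProbabilityMeasure μ]

lemma degree_momentPoly_sub_X_pow_lt (c : ℕ) :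
    (momentPoly μ ξ₀ c - X ^ c).degree < (c : WithBot ℕ) := by
  rw [momentPoly, sum_range_succ]
  simp only [Nat.choose_self, Nat.sub_self, pow_zero, integral_const, probReal_univ, smul_eq_mul,
    mul_one, Nat.cast_one, map_one, one_mul, add_sub_cancel_right]
  refine (degree_sum_le _ _).trans_lt <| (Finset.sup_lt_iff (WithBot.bot_lt_coe c)).mpr
    fun m hm => (degree_C_mul_X_pow_le _ _).trans_lt ?_
  exact WithBot.coe_lt_coe.mpr (mem_range.mp hm)

lemma momentPoly_monic (c : ℕ) : (momentPoly μ ξ₀ c).Monic := by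
  simpa using monic_X_pow_add (degree_momentPoly_sub_X_pow_lt μ ξ₀ c)

lemma natDegree_momentPoly (c : ℕ) : (momentPoly μ ξ₀ c).natDegree = c := by
  rw [← add_sub_cancel (X ^ c) (momentPoly μ ξ₀ c), natDegree_add_eq_left_of_degree_lt,
    natDegree_X_pow]
  simpa using degree_momentPoly_sub_X_pow_lt μ ξ₀ c

end MomentPoly

section HarmonicStep

open Polynomial

lemma prod_add_pow_eq_sum {k : ℕ} (a y : Fin k → ℝ) (c : Fin k → ℕ) :
    ∏ j, (a j + y j) ^ c j = ∑ m ∈ Fintype.piFinset fun j => range (c j + 1),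
      (∏ j, ((c j).choose (m j) : ℝ)) * ((∏ j, a j ^ m j) * ∏ j, y j ^ (c j - m j)) := by
  simp_rw [add_pow, prod_univ_sum]
  refine sum_congr rfl fun m _ => ?_
  simp only [← prod_mul_distrib]
  exact prod_congr rfl fun j _ => by ring

lemma prod_eval_momentPoly {k : ℕ} {Ω : Type*} [MeasurableSpace Ω] (μ : Measure Ω) (ξ₀ : Ω → ℝ)
    (a : Fin k → ℝ) (c : Fin k → ℕ) :
    ∏ j, (momentPoly μ ξ₀ (c j)).eval (a j) = ∑ m ∈ Fintype.piFinset fun j => range (c j + 1),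
      (∏ j, ((c j).choose (m j) : ℝ)) *
        ((∏ j, a j ^ m j) * ∏ j, ∫ ω, ξ₀ ω ^ (c j - m j) ∂μ) := by
  simp_rw [eval_momentPoly, prod_univ_sum]
  refine sum_congr rfl fun m _ => ?_
  simp only [← prod_mul_distrib]
  exact prod_congr rfl fun j _ => by ring

variable {k : ℕ} {Ω : Type*} [MeasurableSpace Ω] {μ : Measure Ω} [IsProbabilityMeasure μ]
  {ξ : ℕ → Fin k → Ω → ℝ} {ξ₀ : Ω → ℝ}

lemma integral_mul_prod_pow_eq (hmeas : ∀ i j, Measurable (ξ i j))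
    (hindep : iIndepFun (Function.uncurry ξ) μ) (hident : ∀ i j, IdentDistrib (ξ i j) ξ₀ μ μ)
    {n : ℕ} {g : Ω → ℝ} (hg : BlockMeasurable (Function.uncurry ξ) (range n ×ˢ univ) g)
    (hgi : Integrable g μ) {e : Fin k → ℕ} (he : ∀ j, Integrable (fun ω => ξ n j ω ^ e j) μ) :
    Integrable (fun ω => g ω * ∏ j, ξ n j ω ^ e j) μ ∧
      ∫ ω, g ω * ∏ j, ξ n j ω ^ e j ∂μ = (∫ ω, g ω ∂μ) * ∏ j, ∫ ω, ξ₀ ω ^ e j ∂μ := by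
  classical
  have hX : ∀ p, Measurable (Function.uncurry ξ p) := fun p => hmeas p.1 p.2
  obtain ⟨hblk, hint, hprod⟩ := BlockMeasurable.integral_prod hX hindep (fun j => {(n, j)})
    (fun j ω => ξ n j ω ^ e j) univ
    (fun a _ b _ hab => disjoint_singleton.mpr fun h => hab (Prod.ext_iff.mp h).2)
    (fun j _ => BlockMeasurable.of_dependsOn (F := fun u => u (n, j) ^ e j) (by fun_prop)
      fun u u' h => by simp only [h (n, j) (by simp)])
    (fun j _ => he j)
  have hdisj : Disjoint (range n ×ˢ (univ : Finset (Fin k))) (univ.biUnion fun j => {(n, j)}) := by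
    simp only [disjoint_left, mem_product, mem_range, mem_biUnion, mem_singleton]
    rintro _ ⟨hlt, -⟩ ⟨j, -, rfl⟩
    exact lt_irrefl n hlt
  have hind := hg.indepFun hX hindep hdisj hblk
  refine ⟨hind.integrable_mul hgi hint, ?_⟩
  rw [hind.integral_fun_mul_eq_mul_integral hgi.1 hint.1, hprod]
  exact congrArg _ (prod_congr rfl fun j _ =>
    ((hident n j).comp (measurable_id.pow_const (e j))).integral_eq)

lemma integrable_mul_prod_walk_pow (hmeas : ∀ i j, Measurable (ξ i j))
    (hindep : iIndepFun (Function.uncurry ξ) μ) (hLp : ∀ i j, MemLp (ξ i j) (k - 1 : ℕ) μ)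
    {χ : Ω → ℝ} (hχ : AEStronglyMeasurable χ μ) (hχ1 : ∀ ω, |χ ω| ≤ 1) (z : Fin k → ℝ) (n : ℕ)
    {m : Fin k → ℕ} (hm : ∀ j, m j ≤ k - 1) :
    Integrable (fun ω => χ ω * ∏ j, (z + walk ξ n ω) j ^ m j) μ := by
  refine (integrable_prod_one_add_abs_walk_pow hmeas hindep hLp z n).mono'
    (hχ.mul ?_) (.of_forall fun ω => ?_)
  · exact (Finset.measurable_prod _ fun j _ =>
      ((measurable_pi_apply j).comp ((measurable_walk hmeas n).const_add z)).pow_const _)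
      |>.aestronglyMeasurable
  · rw [norm_mul, Real.norm_eq_abs, norm_prod]
    refine (mul_le_mul (hχ1 ω) (prod_le_prod (fun _ _ => norm_nonneg _) fun j _ => ?_)
      (prod_nonneg fun _ _ => norm_nonneg _) zero_le_one).trans_eq (one_mul _)
    rw [norm_pow, Real.norm_eq_abs, Pi.add_apply]
    calc |z j + walk ξ n ω j| ^ m j ≤ (1 + |z j + walk ξ n ω j|) ^ m j :=
          pow_le_pow_left₀ (abs_nonneg _) (by linarith) _
      _ ≤ (1 + |z j + walk ξ n ω j|) ^ (k - 1) :=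
          pow_le_pow_right₀ (by linarith [abs_nonneg (z j + walk ξ n ω j)]) (hm j)

lemma integral_mul_prod_walk_pow_mul_prod_pow (hmeas : ∀ i j, Measurable (ξ i j))
    (hindep : iIndepFun (Function.uncurry ξ) μ) (hident : ∀ i j, IdentDistrib (ξ i j) ξ₀ μ μ)
    (hLp : ∀ i j, MemLp (ξ i j) (k - 1 : ℕ) μ) (z : Fin k → ℝ) {n : ℕ} {χ : Ω → ℝ}
    (hχ : BlockMeasurable (Function.uncurry ξ) (range n ×ˢ univ) χ) (hχ1 : ∀ ω, |χ ω| ≤ 1)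
    {m e : Fin k → ℕ} (hm : ∀ j, m j ≤ k - 1) (he : ∀ j, e j ≤ k - 1) :
    Integrable (fun ω => (χ ω * ∏ j, (z + walk ξ n ω) j ^ m j) * ∏ j, ξ n j ω ^ e j) μ ∧
      ∫ ω, (χ ω * ∏ j, (z + walk ξ n ω) j ^ m j) * ∏ j, ξ n j ω ^ e j ∂μ =
        (∫ ω, χ ω * ∏ j, (z + walk ξ n ω) j ^ m j ∂μ) * ∏ j, ∫ ω, ξ₀ ω ^ e j ∂μ :=
  integral_mul_prod_pow_eq hmeas hindep hident
    (hχ.mul (blockMeasurable_comp_walk (F := fun w : Fin k → ℝ => ∏ j, (z + w) j ^ m j)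
      (by fun_prop) (by simpa using dependsOn_univ _) n))
    (integrable_mul_prod_walk_pow hmeas hindep hLp
      (hχ.measurable fun p : ℕ × Fin k => hmeas p.1 p.2).aestronglyMeasurable hχ1 z n hm)
    fun j => (hLp n j).integrable_pow_of_le (he j)

lemma integral_mul_prod_walk_succ_pow (hmeas : ∀ i j, Measurable (ξ i j))
    (hindep : iIndepFun (Function.uncurry ξ) μ) (hident : ∀ i j, IdentDistrib (ξ i j) ξ₀ μ μ)
    (hLp : ∀ i j, MemLp (ξ i j) (k - 1 : ℕ) μ) (z : Fin k → ℝ) {n : ℕ} {χ : Ω → ℝ}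
    (hχ : BlockMeasurable (Function.uncurry ξ) (range n ×ˢ univ) χ) (hχ1 : ∀ ω, |χ ω| ≤ 1)
    {c : Fin k → ℕ} (hc : ∀ j, c j ≤ k - 1) :
    Integrable (fun ω => χ ω * ∏ j, (z + walk ξ (n + 1) ω) j ^ c j) μ ∧
    Integrable (fun ω => χ ω * ∏ j, (momentPoly μ ξ₀ (c j)).eval ((z + walk ξ n ω) j)) μ ∧
    ∫ ω, χ ω * ∏ j, (z + walk ξ (n + 1) ω) j ^ c j ∂μ =
      ∫ ω, χ ω * ∏ j, (momentPoly μ ξ₀ (c j)).eval ((z + walk ξ n ω) j) ∂μ := by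
  classical
  set T := Fintype.piFinset fun j => range (c j + 1)
  set past : (Fin k → ℕ) → Ω → ℝ := fun m ω => χ ω * ∏ j, (z + walk ξ n ω) j ^ m j
  have hmT : ∀ m ∈ T, ∀ j, m j ≤ k - 1 := fun m hm j =>
    (Nat.lt_succ_iff.mp (mem_range.mp (Fintype.mem_piFinset.mp hm j))).trans (hc j)
  have hstep := fun m hm => integral_mul_prod_walk_pow_mul_prod_pow hmeas hindep hident hLp z hχ
    hχ1 (hmT m hm) (e := fun j => c j - m j) fun j => (Nat.sub_le _ _).trans (hc j)
  have hpast : ∀ m ∈ T, Integrable (past m) μ := fun m hm =>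
    integrable_mul_prod_walk_pow hmeas hindep hLp
      (hχ.measurable fun p : ℕ × Fin k => hmeas p.1 p.2).aestronglyMeasurable hχ1 z n (hmT m hm)
  have hL : ∀ ω, χ ω * ∏ j, (z + walk ξ (n + 1) ω) j ^ c j = ∑ m ∈ T,
      (∏ j, ((c j).choose (m j) : ℝ)) * (past m ω * ∏ j, ξ n j ω ^ (c j - m j)) := fun ω => by
    simp only [walk_succ, ← add_assoc, Pi.add_apply]
    rw [prod_add_pow_eq_sum (fun j => z j + walk ξ n ω j), mul_sum]
    exact sum_congr rfl fun m _ => by simp only [past, Pi.add_apply]; ring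
  have hR : ∀ ω, χ ω * ∏ j, (momentPoly μ ξ₀ (c j)).eval ((z + walk ξ n ω) j) = ∑ m ∈ T,
      (∏ j, ((c j).choose (m j) : ℝ)) * (past m ω * ∏ j, ∫ ω, ξ₀ ω ^ (c j - m j) ∂μ) :=
    fun ω => by
      rw [prod_eval_momentPoly, mul_sum]
      exact sum_congr rfl fun m _ => by simp only [past]; ring
  simp only [hL, hR]
  refine ⟨integrable_finsetSum _ fun m hm => (hstep m hm).1.const_mul _,
    integrable_finsetSum _ fun m hm => ((hpast m hm).mul_const _).const_mul _, ?_⟩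
  rw [integral_finsetSum _ fun m hm => (hstep m hm).1.const_mul _,
    integral_finsetSum _ fun m hm => ((hpast m hm).mul_const _).const_mul _]
  refine sum_congr rfl fun m hm => ?_
  rw [integral_const_mul, integral_const_mul, (hstep m hm).2, integral_mul_const]

lemma integral_mul_vdm_walk_succ (hmeas : ∀ i j, Measurable (ξ i j))
    (hindep : iIndepFun (Function.uncurry ξ) μ) (hident : ∀ i j, IdentDistrib (ξ i j) ξ₀ μ μ)
    (hLp : ∀ i j, MemLp (ξ i j) (k - 1 : ℕ) μ) (z : Fin k → ℝ) {n : ℕ} {χ : Ω → ℝ}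
    (hχ : BlockMeasurable (Function.uncurry ξ) (range n ×ˢ univ) χ) (hχ1 : ∀ ω, |χ ω| ≤ 1) :
    ∫ ω, χ ω * vdm k (z + walk ξ (n + 1) ω) ∂μ = ∫ ω, χ ω * vdm k (z + walk ξ n ω) ∂μ := by
  classical
  have key := fun σ : Equiv.Perm (Fin k) => integral_mul_prod_walk_succ_pow hmeas hindep hident
    hLp z hχ hχ1 (c := fun j => σ⁻¹ j) fun j => Nat.le_sub_one_of_lt (σ⁻¹ j).isLt
  conv_lhs => simp only [vdm_eq_sum_perm (fun b => X ^ (b : ℕ)) (by simp) (fun _ => monic_X_pow _),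
    eval_pow, eval_X, mul_sum, mul_left_comm (χ _)]
  conv_rhs => simp only [vdm_eq_sum_perm (fun b => momentPoly μ ξ₀ b)
    (fun b => natDegree_momentPoly μ ξ₀ b) (fun b => momentPoly_monic μ ξ₀ b), mul_sum,
    mul_left_comm (χ _)]
  rw [integral_finsetSum _ fun σ _ => (key σ).1.const_mul _,
    integral_finsetSum _ fun σ _ => (key σ).2.1.const_mul _]
  exact sum_congr rfl fun σ _ => by rw [integral_const_mul, integral_const_mul, (key σ).2.2]

end HarmonicStep

section OptionalStopping

variable {k : ℕ}

def IsFirstExit (p : ℕ → Fin k → ℝ) (t : ℕ) : Prop :=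
  1 ≤ t ∧ p t ∉ weyl k ∧ ∀ m, 1 ≤ m → m < t → p m ∈ weyl k

namespace IsFirstExit

variable {p q : ℕ → Fin k → ℝ} {s t : ℕ}

lemma lt_iff (h : IsFirstExit p t) (n : ℕ) : n < t ↔ ∀ m ∈ Icc 1 n, p m ∈ weyl k := by
  refine ⟨fun hn m hm => h.2.2 m (mem_Icc.mp hm).1 ((mem_Icc.mp hm).2.trans_lt hn), fun hW => ?_⟩
  by_contra! htn
  exact h.2.1 (hW t (mem_Icc.mpr ⟨h.1, htn⟩))

lemma mem_weyl (h : IsFirstExit p t) (h0 : p 0 ∈ weyl k) {n : ℕ} (hn : n < t) : p n ∈ weyl k := by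
  rcases Nat.eq_zero_or_pos n with rfl | hpos
  · exact h0
  · exact h.2.2 n hpos hn

lemma le_of_monotone_sub (hp : IsFirstExit p s) (hq : IsFirstExit q t) (hp0 : p 0 ∈ weyl k)
    (hpq : ∀ m, Monotone (q m - p m)) : s ≤ t := by
  by_contra! hts
  exact hq.2.1 (mem_weyl_of_monotone_sub (hp.mem_weyl hp0 hts) (hpq t))

end IsFirstExit

variable {Ω : Type*} [MeasurableSpace Ω] {μ : Measure Ω}

lemma integrable_comp_of_le {f : ℕ → Ω → ℝ} (hf : ∀ l, Integrable (f l) μ) {σ : Ω → ℕ}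
    (hσ : Measurable σ) {N : ℕ} (hN : ∀ ω, σ ω ≤ N) : Integrable (fun ω => f (σ ω) ω) μ := by
  have : (fun ω => f (σ ω) ω) = fun ω => ∑ l ∈ range (N + 1), {ω | σ ω = l}.indicator (f l) ω := by
    ext ω
    rw [sum_eq_single_of_mem (f := fun l => {ω | σ ω = l}.indicator (f l) ω) (σ ω)
      (mem_range.mpr (Nat.lt_succ_of_le (hN ω))) fun l _ hl => by simp [Ne.symm hl]]
    simp
  rw [this]
  exact integrable_finsetSum _ fun l _ => (hf l).indicator (hσ (measurableSet_singleton l))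

variable [IsProbabilityMeasure μ] {ξ : ℕ → Fin k → Ω → ℝ} {ξ₀ : Ω → ℝ}

lemma integral_vdm_walk_min_succ (hmeas : ∀ i j, Measurable (ξ i j))
    (hindep : iIndepFun (Function.uncurry ξ) μ) (hident : ∀ i j, IdentDistrib (ξ i j) ξ₀ μ μ)
    (hLp : ∀ i j, MemLp (ξ i j) (k - 1 : ℕ) μ) (z : Fin k → ℝ) {τ : Ω → ℕ} (hτm : Measurable τ)
    (hτ : ∀ᵐ ω ∂μ, IsFirstExit (fun m => z + walk ξ m ω) (τ ω)) (n : ℕ) :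
    ∫ ω, vdm k (z + walk ξ (min (τ ω) (n + 1)) ω) ∂μ =
      ∫ ω, vdm k (z + walk ξ (min (τ ω) n) ω) ∂μ := by
  have hint := integrable_vdm_walk hmeas hindep hLp z
  have hint_min : ∀ n, Integrable (fun ω => vdm k (z + walk ξ (min (τ ω) n) ω)) μ := fun n =>
    integrable_comp_of_le hint (hτm.min measurable_const) fun _ => min_le_right _ _
  -- Up to a null set `χ` is the indicator of `{n < τ}`; it is a function of the steps before `n`.
  set χ : Ω → ℝ := fun ω => ∏ m ∈ Icc 1 n, (weyl k).indicator 1 (z + walk ξ m ω)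
  have hχ1 : ∀ ω, |χ ω| ≤ 1 := fun ω => by
    rw [abs_of_nonneg (prod_nonneg fun _ _ => Set.indicator_nonneg (fun _ _ => zero_le_one) _)]
    exact prod_le_one (fun _ _ => Set.indicator_nonneg (fun _ _ => zero_le_one) _)
      fun _ _ => Set.indicator_le_self' (fun _ _ => zero_le_one) _
  have hdiff : (fun ω => vdm k (z + walk ξ (min (τ ω) (n + 1)) ω) -
        vdm k (z + walk ξ (min (τ ω) n) ω)) =ᵐ[μ]
      fun ω => χ ω * vdm k (z + walk ξ (n + 1) ω) - χ ω * vdm k (z + walk ξ n ω) := by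
    filter_upwards [hτ] with ω hω
    by_cases hn : n < τ ω
    · have : χ ω = 1 := prod_eq_one fun m hm => Set.indicator_of_mem ((hω.lt_iff n).mp hn m hm) _
      rw [min_eq_right hn.le, min_eq_right (Nat.succ_le_of_lt hn), this, one_mul, one_mul]
    · obtain ⟨m, hm, hmW⟩ := not_forall₂.mp (mt (hω.lt_iff n).mpr hn)
      have : χ ω = 0 := prod_eq_zero hm (Set.indicator_of_notMem hmW _)
      rw [min_eq_left (not_lt.mp hn), min_eq_left (by omega), this]
      ring
  have hχint : ∀ l, Integrable (fun ω => χ ω * vdm k (z + walk ξ l ω)) μ := fun l =>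
    (hint l).bdd_mul ((blockMeasurable_prod_indicator_weyl z n).measurable
      fun p : ℕ × Fin k => hmeas p.1 p.2).aestronglyMeasurable
      (.of_forall fun ω => (Real.norm_eq_abs _).trans_le (hχ1 ω))
  have := integral_congr_ae hdiff
  rwa [integral_sub (hint_min _) (hint_min _), integral_sub (hχint _) (hχint _),
    integral_mul_vdm_walk_succ hmeas hindep hident hLp z (blockMeasurable_prod_indicator_weyl z n)
      hχ1, sub_self, sub_eq_zero] at this

/-- Optional stopping for the martingale `Δ(z + S_n)` at the bounded time `τ ∧ n`. -/
lemma integral_vdm_walk_min (hmeas : ∀ i j, Measurable (ξ i j))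
    (hindep : iIndepFun (Function.uncurry ξ) μ) (hident : ∀ i j, IdentDistrib (ξ i j) ξ₀ μ μ)
    (hLp : ∀ i j, MemLp (ξ i j) (k - 1 : ℕ) μ) (z : Fin k → ℝ) {τ : Ω → ℕ} (hτm : Measurable τ)
    (hτ : ∀ᵐ ω ∂μ, IsFirstExit (fun m => z + walk ξ m ω) (τ ω)) (n : ℕ) :
    ∫ ω, vdm k (z + walk ξ (min (τ ω) n) ω) ∂μ = vdm k z := by
  induction n with
  | zero => simp
  | succ n ih => rw [integral_vdm_walk_min_succ hmeas hindep hident hLp z hτm hτ, ih]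

lemma tendsto_setIntegral_vdm_walk (hmeas : ∀ i j, Measurable (ξ i j))
    (hindep : iIndepFun (Function.uncurry ξ) μ) (hident : ∀ i j, IdentDistrib (ξ i j) ξ₀ μ μ)
    (hLp : ∀ i j, MemLp (ξ i j) (k - 1 : ℕ) μ) (z : Fin k → ℝ) {τ : Ω → ℕ} (hτm : Measurable τ)
    (hτ : ∀ᵐ ω ∂μ, IsFirstExit (fun m => z + walk ξ m ω) (τ ω))
    (hint : Integrable (fun ω => vdm k (z + walk ξ (τ ω) ω)) μ) :
    Tendsto (fun n => ∫ ω in {ω | n < τ ω}, vdm k (z + walk ξ n ω) ∂μ) atTop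
      (𝓝 (vdm k z - ∫ ω, vdm k (z + walk ξ (τ ω) ω) ∂μ)) := by
  have hmeas_lt : ∀ n, MeasurableSet {ω | n < τ ω} := fun n => hτm measurableSet_Ioi
  have hsplit : ∀ n, ∫ ω in {ω | n < τ ω}, vdm k (z + walk ξ n ω) ∂μ =
      vdm k z - ∫ ω, vdm k (z + walk ξ (τ ω) ω) ∂μ +
        ∫ ω in {ω | n < τ ω}, vdm k (z + walk ξ (τ ω) ω) ∂μ := fun n => by
    have hstop := integral_vdm_walk_min hmeas hindep hident hLp z hτm hτ n
    rw [← integral_add_compl (hmeas_lt n) (integrable_comp_of_le (integrable_vdm_walk hmeas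
      hindep hLp z) (hτm.min measurable_const) fun _ => min_le_right _ _),
      setIntegral_congr_fun (hmeas_lt n) fun ω hω => by rw [min_eq_right (le_of_lt hω)],
      setIntegral_congr_fun (hmeas_lt n).compl fun ω (hω : ¬n < τ ω) => by
        rw [min_eq_left (not_lt.mp hω)]] at hstop
    rw [← integral_add_compl (hmeas_lt n) hint, ← hstop]
    ring
  have hrem : Tendsto (fun n => ∫ ω in {ω | n < τ ω}, vdm k (z + walk ξ (τ ω) ω) ∂μ) atTop
      (𝓝 0) := by
    have hempty : ⋂ n, {ω | n < τ ω} = ∅ :=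
      Set.eq_empty_of_forall_notMem fun ω hω => lt_irrefl (τ ω) (Set.mem_iInter.mp hω (τ ω))
    simpa [hempty] using tendsto_setIntegral_of_antitone hmeas_lt
      (fun m n hmn ω (hω : n < τ ω) => hmn.trans_lt hω) ⟨0, hint.integrableOn⟩
  simpa [hsplit] using tendsto_const_nhds.add hrem

lemma setIntegral_vdm_walk_mono (hmeas : ∀ i j, Measurable (ξ i j))
    (hindep : iIndepFun (Function.uncurry ξ) μ) (hLp : ∀ i j, MemLp (ξ i j) (k - 1 : ℕ) μ)
    {x y : Fin k → ℝ} (hx : x ∈ weyl k) (hxy : Monotone (y - x)) {τx τy : Ω → ℕ}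
    (hτxm : Measurable τx) (hτym : Measurable τy)
    (hτx : ∀ᵐ ω ∂μ, IsFirstExit (fun m => x + walk ξ m ω) (τx ω))
    (hτy : ∀ᵐ ω ∂μ, IsFirstExit (fun m => y + walk ξ m ω) (τy ω)) (n : ℕ) :
    ∫ ω in {ω | n < τx ω}, vdm k (x + walk ξ n ω) ∂μ ≤
      ∫ ω in {ω | n < τy ω}, vdm k (y + walk ξ n ω) ∂μ := by
  have hy := mem_weyl_of_monotone_sub hx hxy
  have hxy_walk : ∀ ω m, Monotone ((y + walk ξ m ω) - (x + walk ξ m ω)) := fun ω m => by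
    rwa [add_sub_add_right_eq_sub]
  calc ∫ ω in {ω | n < τx ω}, vdm k (x + walk ξ n ω) ∂μ
      ≤ ∫ ω in {ω | n < τx ω}, vdm k (y + walk ξ n ω) ∂μ := by
        refine setIntegral_mono_on_ae (integrable_vdm_walk hmeas hindep hLp x n).integrableOn
          (integrable_vdm_walk hmeas hindep hLp y n).integrableOn (hτxm measurableSet_Ioi) ?_
        filter_upwards [hτx] with ω hω hn
        exact vdm_le_vdm_of_monotone_sub (hω.mem_weyl (by simpa using hx) hn) (hxy_walk ω n)
    _ ≤ ∫ ω in {ω | n < τy ω}, vdm k (y + walk ξ n ω) ∂μ := by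
        refine setIntegral_mono_set (integrable_vdm_walk hmeas hindep hLp y n).integrableOn ?_ ?_
        · refine (ae_restrict_iff' (hτym measurableSet_Ioi)).mpr ?_
          filter_upwards [hτy] with ω hω hn
          exact (vdm_pos_of_mem_weyl (hω.mem_weyl (by simpa using hy) hn)).le
        · filter_upwards [hτx, hτy] with ω hωx hωy hn
          exact lt_of_lt_of_le hn (hωx.le_of_monotone_sub hωy (by simpa using hx) (hxy_walk ω))

end OptionalStopping

theorem V_monotone_general
    (k : ℕ) {Ω : Type} [MeasurableSpace Ω] (μ : Measure Ω) [IsProbabilityMeasure μ]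
    (ξ : ℕ → Fin k → Ω → ℝ) (ξ₀ : Ω → ℝ)
    (hmeas : ∀ i j, Measurable (ξ i j))
    (hindep : iIndepFun (fun p : ℕ × Fin k => ξ p.1 p.2) μ)
    (hident : ∀ i j, IdentDistrib (ξ i j) ξ₀ μ μ)
    (S : ℕ → Ω → Fin k → ℝ)
    (hS : ∀ n ω j, S n ω j = ∑ i ∈ Finset.range n, ξ i j ω)
    (hmom : ∃ α : ℝ, 2 < α ∧ (k : ℝ) - 1 ≤ α ∧ Integrable (fun ω => |ξ₀ ω| ^ α) μ)
    (x y : Fin k → ℝ) (hx : x ∈ weyl k)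
    (hgap : ∀ j : Fin k, ∀ h : (j : ℕ) + 1 < k,
        x ⟨(j : ℕ) + 1, h⟩ - x j ≤ y ⟨(j : ℕ) + 1, h⟩ - y j)
    (τx τy : Ω → ℕ) (hτxmeas : Measurable τx) (hτymeas : Measurable τy)
    (hτx : ∀ᵐ ω ∂μ, 1 ≤ τx ω ∧ (fun j => x j + S (τx ω) ω j) ∉ weyl k ∧
        ∀ m : ℕ, 1 ≤ m → m < τx ω → (fun j => x j + S m ω j) ∈ weyl k)
    (hτy : ∀ᵐ ω ∂μ, 1 ≤ τy ω ∧ (fun j => y j + S (τy ω) ω j) ∉ weyl k ∧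
        ∀ m : ℕ, 1 ≤ m → m < τy ω → (fun j => y j + S m ω j) ∈ weyl k)
    (hintx : Integrable (fun ω => vdm k (fun j => x j + S (τx ω) ω j)) μ)
    (hinty : Integrable (fun ω => vdm k (fun j => y j + S (τy ω) ω j)) μ) :
    vdm k x - ∫ ω, vdm k (fun j => x j + S (τx ω) ω j) ∂μ
      ≤ vdm k y - ∫ ω, vdm k (fun j => y j + S (τy ω) ω j) ∂μ := by
  obtain ⟨α, hα2, hαk, hα⟩ := hmom
  have hk : ((k - 1 : ℕ) : ℝ) ≤ α := by
    rcases Nat.eq_zero_or_pos k with rfl | hk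
    · simp only [zero_tsub, Nat.cast_zero]; linarith
    · rwa [Nat.cast_sub hk, Nat.cast_one]
  have hLp : ∀ i j, MemLp (ξ i j) (k - 1 : ℕ) μ := fun i j => (hident i j).memLp_iff.mpr <|
    memLp_of_integrable_abs_rpow (hident i j).aemeasurable_snd.aestronglyMeasurable
      (by linarith) hk hα
  obtain rfl : S = walk ξ := funext fun n => funext fun ω => funext fun j => hS n ω j
  exact le_of_tendsto_of_tendsto'
    (tendsto_setIntegral_vdm_walk hmeas hindep hident hLp x hτxmeas hτx hintx)
    (tendsto_setIntegral_vdm_walk hmeas hindep hident hLp y hτymeas hτy hinty)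
    (setIntegral_vdm_walk_mono hmeas hindep hLp hx (monotone_sub_of_gaps hgap) hτxmeas hτymeas
      hτx hτy)

/-- V is monotone in the gaps: if all consecutive gaps of x are
dominated by those of y, then V(x) ≤ V(y), where V(z) = Δ(z) − E[Δ(z+S_{τ_z})]. -/
theorem V_monotone
    (k : ℕ) {Ω : Type} [MeasurableSpace Ω] (μ : Measure Ω) [IsProbabilityMeasure μ]
    (ξ : ℕ → Fin k → Ω → ℝ) (ξ₀ : Ω → ℝ) (hmeas₀ : Measurable ξ₀)
    (hmeas : ∀ i j, Measurable (ξ i j))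
    (hindep : iIndepFun (fun p : ℕ × Fin k => ξ p.1 p.2) μ)
    (hident : ∀ i j, IdentDistrib (ξ i j) ξ₀ μ μ)
    (hmean : ∫ ω, ξ₀ ω ∂μ = 0)
    (S : ℕ → Ω → Fin k → ℝ)
    (hS : ∀ n ω j, S n ω j = ∑ i ∈ Finset.range n, ξ i j ω)
    (hSmeas : ∀ n, StronglyMeasurable (S n))
    (hk : 3 ≤ k)
    (hvar : ∫ ω, (ξ₀ ω) ^ 2 ∂μ = 1)
    (hmom : ∃ α : ℝ, 2 < α ∧ (k : ℝ) - 1 ≤ α ∧ Integrable (fun ω => |ξ₀ ω| ^ α) μ)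
    (x y : Fin k → ℝ) (hx : x ∈ weyl k) (hy : y ∈ weyl k)
    (hgap : ∀ j : Fin k, ∀ h : (j : ℕ) + 1 < k,
        x ⟨(j : ℕ) + 1, h⟩ - x j ≤ y ⟨(j : ℕ) + 1, h⟩ - y j)
    (τx τy : Ω → ℕ) (hτxmeas : Measurable τx) (hτymeas : Measurable τy)
    (hτx : ∀ᵐ ω ∂μ, 1 ≤ τx ω ∧ (fun j => x j + S (τx ω) ω j) ∉ weyl k ∧
        ∀ m : ℕ, 1 ≤ m → m < τx ω → (fun j => x j + S m ω j) ∈ weyl k)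
    (hτy : ∀ᵐ ω ∂μ, 1 ≤ τy ω ∧ (fun j => y j + S (τy ω) ω j) ∉ weyl k ∧
        ∀ m : ℕ, 1 ≤ m → m < τy ω → (fun j => y j + S m ω j) ∈ weyl k)
    (hintx : Integrable (fun ω => vdm k (fun j => x j + S (τx ω) ω j)) μ)
    (hinty : Integrable (fun ω => vdm k (fun j => y j + S (τy ω) ω j)) μ) :
    vdm k x - ∫ ω, vdm k (fun j => x j + S (τx ω) ω j) ∂μ
      ≤ vdm k y - ∫ ω, vdm k (fun j => y j + S (τy ω) ω j) ∂μ :=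
  V_monotone_general k μ ξ ξ₀ hmeas hindep hident S hS hmom x y hx hgap τx τy hτxmeas hτymeas hτx
    hτy hintx hinty
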